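/- For all real α and β, all m ≥ 2, and all 1 ≤ k ≤ ⌊m/2⌋, let S_k = {x ∈ 𝔐²_m : |x|_U = k} and let A_k be the subset of S_k consisting of those 2-Motzkin paths in which the first D symbol appears immediately after a U (i.e., the symbol immediately preceding the first occurrence of D is a U). Then Σ_{x ∈ A_k} e^{−E(x)} = (2k/m) · Σ_{x ∈ S_k} e^{−E(x)}. -/

import Mathlib

open Finset

/-- The four symbols of a 2-Motzkin path: up-step `U`, two colors of
horizontal steps `H` and `I`, and down-step `D`. -/
inductive MSym : Type
  | U | H | I | D
  deriving DecidableEq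

instance : Fintype MSym where
  elems := {MSym.U, MSym.H, MSym.I, MSym.D}
  complete := fun x => by cases x <;> simp

/-- `symCount x a` is `|x|_a`, the number of occurrences of the symbol `a` in `x`. -/
def symCount {m : ℕ} (x : Fin m → MSym) (a : MSym) : ℕ :=
  (Finset.univ.filter (fun i => x i = a)).card

/-- the number of occurrences of `a` among the first `j+1` symbols of `x`. -/
def symCountPrefix {m : ℕ} (x : Fin m → MSym) (a : MSym) (j : Fin m) : ℕ :=
  (Finset.univ.filter (fun i => i ≤ j ∧ x i = a)).card

/-- `x` is a 2-Motzkin path: no prefix has more `D`s than `U`s, and the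
total number of `U`s equals the total number of `D`s. -/
def IsMotzkin2 {m : ℕ} (x : Fin m → MSym) : Prop :=
  (∀ j : Fin m, symCountPrefix x MSym.D j ≤ symCountPrefix x MSym.U j) ∧
    symCount x MSym.U = symCount x MSym.D

instance {m : ℕ} : DecidablePred (IsMotzkin2 (m := m)) := fun _ => by
  unfold IsMotzkin2; infer_instance

/-- `𝔐²_m` : the set of 2-Motzkin paths of length `m`. -/
abbrev Motzkin2 (m : ℕ) : Type := {x : Fin m → MSym // IsMotzkin2 x}

/-- The energy `E(x) = α(|x|_U + |x|_H + 1) + β |x|_I`. -/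
noncomputable def energy (α β : ℝ) {m : ℕ} (x : Fin m → MSym) : ℝ :=
  α * ((symCount x MSym.U : ℝ) + (symCount x MSym.H : ℝ) + 1) + β * (symCount x MSym.I : ℝ)

/-- pairs of consecutive positions `(i, i+1)`. -/
def adjPairs (m : ℕ) : Finset (Fin m × Fin m) :=
  Finset.univ.filter (fun p => (p.2 : ℕ) = (p.1 : ℕ) + 1)

/-- The string `x` with the symbols `a`, `b` placed at positions `i`, `j`. -/
def setTwo {m : ℕ} (x : Fin m → MSym) (i j : Fin m) (a b : MSym) : Fin m → MSym :=
  Function.update (Function.update x i a) j b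

def isUD (a : MSym) : Prop := a = MSym.U ∨ a = MSym.D
def isHI (a : MSym) : Prop := a = MSym.H ∨ a = MSym.I
instance : DecidablePred isUD := fun a => by unfold isUD; infer_instance
instance : DecidablePred isHI := fun a => by unfold isHI; infer_instance

/-- The probability of moving from `x` to a *different* string `y` in one step
of the chain `M`: with probability 1/4 each, one of the four kinds of moves is
proposed (a uniformly random choice of positions together with the indicated
coin flips), and an (automatically valid) proposal `y ≠ x` is accepted with
probability 1/2. -/
noncomputable def stepWeight (α β : ℝ) {m : ℕ} (x y : Fin m → MSym) : ℝ :=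
  -- move 1 : UD ↔ HH at a random pair of consecutive positions
  (1/4) * (1/((m : ℝ) - 1)) * (1/2) *
    (∑ p ∈ adjPairs m,
      ((if x p.1 = MSym.U ∧ x p.2 = MSym.D ∧ y = setTwo x p.1 p.2 MSym.H MSym.H then
          Real.exp (-α) / (1 + Real.exp (-α)) else 0) +
       (if x p.1 = MSym.H ∧ x p.2 = MSym.H ∧ y = setTwo x p.1 p.2 MSym.U MSym.D then
          1 / (1 + Real.exp (-α)) else 0)))
  -- move 2 : H ↔ I at a random position
  + (1/4) * (1/(m : ℝ)) * (1/2) *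
    (∑ i : Fin m,
      ((if x i = MSym.I ∧ y = Function.update x i MSym.H then
          Real.exp (-α) / (Real.exp (-α) + Real.exp (-β)) else 0) +
       (if x i = MSym.H ∧ y = Function.update x i MSym.I then
          Real.exp (-β) / (Real.exp (-α) + Real.exp (-β)) else 0)))
  -- move 3 : swap the symbols at two uniform random positions, both in {U, D}
  + (1/4) * (1/((m : ℝ) * (m : ℝ))) * (1/2) *
    (∑ p : Fin m × Fin m,
      (if isUD (x p.1) ∧ isUD (x p.2) ∧ y = setTwo x p.1 p.2 (x p.2) (x p.1) then
        (1 : ℝ) else 0))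
  -- move 4 : reverse an adjacent pair consisting of one of {U,D} and one of {H,I}
  + (1/4) * (1/((m : ℝ) - 1)) * (1/2) *
    (∑ p ∈ adjPairs m,
      (if ((isUD (x p.1) ∧ isHI (x p.2)) ∨ (isHI (x p.1) ∧ isUD (x p.2))) ∧
          y = setTwo x p.1 p.2 (x p.2) (x p.1) then (1 : ℝ) else 0))

/-- The transition matrix of the Markov chain `M` on `𝔐²_m`: off the diagonal
the probability of the corresponding accepted move; proposals that are rejected,
invalid, or coincide with the current state contribute to the holding
probability on the diagonal. -/
noncomputable def transP (α β : ℝ) (m : ℕ) : Matrix (Motzkin2 m) (Motzkin2 m) ℝ :=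
  fun x y =>
    if x = y then
      1 - ∑ z : Motzkin2 m, (if z = x then 0 else stepWeight α β x.1 z.1)
    else stepWeight α β x.1 y.1

/-- The Gibbs distribution `π(x) = e^{-E(x)}/Z` on `𝔐²_m`. -/
noncomputable def gibbs (α β : ℝ) (m : ℕ) (x : Motzkin2 m) : ℝ :=
  Real.exp (-(energy α β x.1)) / ∑ y : Motzkin2 m, Real.exp (-(energy α β y.1))

/-- The spectral gap `1 - |λ₁|` of a transition matrix: one minus the largest
absolute value of an eigenvalue different from `λ₀ = 1`. -/
noncomputable def spectralGap {n : Type*} [Fintype n] [DecidableEq n]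
    (P : Matrix n n ℝ) : ℝ :=
  1 - sSup {r : ℝ | ∃ μ : ℂ,
    μ ∈ spectrum ℂ (P.map (fun t => (t : ℂ))) ∧ μ ≠ 1 ∧ r = ‖μ‖}

/-- `S_k = {x ∈ 𝔐²_m : |x|_U = k}`. -/
def Sset (m k : ℕ) : Finset (Motzkin2 m) :=
  Finset.univ.filter (fun x => symCount x.1 MSym.U = k)

/-- The first `D` symbol of `x` appears immediately after a `U`: there are
consecutive positions carrying `U`, `D`, with the latter the first `D` of `x`. -/
def firstDAfterU {m : ℕ} (x : Fin m → MSym) : Prop :=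
  ∃ p : Fin m × Fin m, (p.2 : ℕ) = (p.1 : ℕ) + 1 ∧
    x p.1 = MSym.U ∧ x p.2 = MSym.D ∧ ∀ i : Fin m, x i = MSym.D → p.2 ≤ i

instance {m : ℕ} : DecidablePred (firstDAfterU (m := m)) := fun _ => by
  unfold firstDAfterU; infer_instance

/-!
Record the set `S` of positions carrying `U` or `D`: a path in `S_k` is an interleaving of a
Dyck word of length `2k`, read along `S`, with a word in `H, I`. Relabelling the positions by a
permutation that is monotone on `S` preserves the energy, the Motzkin property and the number
`r` of `U`s before the first `D`, so each of the `C(m, 2k)` choices of `S` carries the same total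
weight. A path lies in `A_k` exactly when the elements of `S` of ranks `r - 1` and `r` are
adjacent, and for `1 ≤ r < 2k` exactly `C(m - 1, 2k - 1)` of the `2k`-subsets of positions have
this property, by summing over the position of the adjacent pair and applying the upper
Vandermonde identity. The ratio is `C(m - 1, 2k - 1) / C(m, 2k) = 2k / m`.
-/

section Rank

variable {α : Type*} [LinearOrder α] {S : Finset α} {a b : α}

def rankIn (S : Finset α) (a : α) : ℕ := #{b ∈ S | b < a}

theorem rankIn_lt_rankIn (ha : a ∈ S) (hab : a < b) : rankIn S a < rankIn S b := by
  refine card_lt_card ⟨monotone_filter_right _ fun _ _ hc => hc.trans hab, fun h => ?_⟩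
  simpa using h (mem_filter.mpr ⟨ha, hab⟩)

theorem rankIn_injOn (S : Finset α) : Set.InjOn (rankIn S) S := by
  intro a ha b hb h
  by_contra hne
  rcases lt_or_gt_of_ne hne with hab | hba
  · exact (rankIn_lt_rankIn ha hab).ne h
  · exact (rankIn_lt_rankIn hb hba).ne' h

theorem rankIn_lt_card (ha : a ∈ S) : rankIn S a < #S :=
  card_lt_card ⟨filter_subset _ _, fun h => by simpa using h ha⟩

theorem exists_rankIn_eq {r : ℕ} (hr : r < #S) : ∃ a ∈ S, rankIn S a = r := by
  obtain ⟨a, ha, h⟩ := surj_on_of_inj_on_of_card_le (t := range #S) (fun a _ => rankIn S a)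
    (fun _ ha => mem_range.mpr (rankIn_lt_card ha)) (fun _ _ ha hb h => rankIn_injOn S ha hb h)
    (by simp) r (mem_range.mpr hr)
  exact ⟨a, ha, h.symm⟩

theorem rankIn_of_covBy (ha : a ∈ S) (hab : a ⋖ b) : rankIn S b = rankIn S a + 1 := by
  have : {c ∈ S | c < b} = insert a {c ∈ S | c < a} := by
    ext c
    simp only [mem_filter, mem_insert]
    constructor
    · rintro ⟨hc, hcb⟩
      rcases (hab.le_of_lt hcb).lt_or_eq with h | h
      · exact Or.inr ⟨hc, h⟩
      · exact Or.inl h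
    · rintro (rfl | ⟨hc, hca⟩)
      · exact ⟨ha, hab.lt⟩
      · exact ⟨hc, hca.trans hab.lt⟩
  rw [rankIn, this, card_insert_of_notMem (by simp)]
  rfl

end Rank

theorem card_filter_exists_eq_sum {ι κ : Type*} [DecidableEq κ] (s : Finset κ) (t : Finset ι)
    (P : ι → κ → Prop) [∀ a, DecidablePred (P a)]
    [DecidablePred fun b => ∃ a ∈ t, P a b]
    (huniq : ∀ b ∈ s, ∀ a ∈ t, ∀ a' ∈ t, P a b → P a' b → a = a') :
    #{b ∈ s | ∃ a ∈ t, P a b} = ∑ a ∈ t, #{b ∈ s | P a b} := by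
  rw [← card_biUnion]
  · congr 1
    ext b
    simp only [mem_filter, mem_biUnion]
    constructor
    · rintro ⟨hb, a, ha, hab⟩
      exact ⟨a, ha, hb, hab⟩
    · rintro ⟨a, ha, hb, hab⟩
      exact ⟨hb, a, ha, hab⟩
  · intro a ha a' ha' hne
    simp only [Function.onFun]
    rw [Finset.disjoint_left]
    intro b hb hb'
    rw [mem_filter] at hb hb'
    exact hne (huniq b hb.1 a ha a' ha' hb.2 hb'.2)

section Block

variable {α : Type*} [LinearOrder α] [LocallyFiniteOrder α] {S A B : Finset α} {a b : α}

theorem filter_lt_union_Icc_union_filter_gt (h : Icc a b ⊆ S) :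
    {c ∈ S | c < a} ∪ Icc a b ∪ {c ∈ S | b < c} = S := by
  ext c
  have := @h c
  simp only [mem_union, mem_filter, mem_Icc] at this ⊢
  grind

theorem filter_lt_union_Icc_union (hA : ∀ c ∈ A, c < a) (hB : ∀ c ∈ B, b < c)
    (hab : a ≤ b) :
    {c ∈ A ∪ Icc a b ∪ B | c < a} = A := by
  ext c
  have := hA c
  have := hB c
  simp only [mem_union, mem_filter, mem_Icc]
  grind

theorem filter_gt_union_Icc_union (hA : ∀ c ∈ A, c < a) (hB : ∀ c ∈ B, b < c)
    (hab : a ≤ b) :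
    {c ∈ A ∪ Icc a b ∪ B | b < c} = B := by
  ext c
  have := hA c
  have := hB c
  simp only [mem_union, mem_filter, mem_Icc]
  grind

theorem card_union_Icc_union (hA : ∀ c ∈ A, c < a) (hB : ∀ c ∈ B, b < c) (hab : a ≤ b) :
    #(A ∪ Icc a b ∪ B) = #A + #(Icc a b) + #B := by
  rw [card_union_of_disjoint, card_union_of_disjoint]
  · exact disjoint_left.mpr fun c hcA hc => by
      have := hA c hcA; simp only [mem_Icc] at hc; grind
  · exact disjoint_left.mpr fun c hc hcB => by
      have := hB c hcB; have := hA c; simp only [mem_union, mem_Icc] at hc; grind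

end Block

theorem card_filter_Icc_subset_rankIn_eq {m : ℕ} {a b : Fin m} (hab : a ≤ b) (r s : ℕ) :
    #{S ∈ powersetCard (r + #(Icc a b) + s) (univ : Finset (Fin m)) |
        Icc a b ⊆ S ∧ rankIn S a = r} = (a : ℕ).choose r * (m - 1 - b).choose s := by
  rw [← Fin.card_Iio a, ← Fin.card_Ioi b, ← card_powersetCard, ← card_powersetCard,
    ← card_product]
  refine card_nbij' (fun S => ({c ∈ S | c < a}, {c ∈ S | b < c}))
    (fun AB => AB.1 ∪ Icc a b ∪ AB.2) ?_ ?_ ?_ ?_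
  · intro S hS
    simp only [coe_filter, mem_powersetCard_univ, Set.mem_ofPred_eq] at hS
    obtain ⟨hcard, hsub, hrank⟩ := hS
    have hsplit := card_union_Icc_union (A := {c ∈ S | c < a}) (B := {c ∈ S | b < c})
      (by simp) (by simp) hab
    rw [filter_lt_union_Icc_union_filter_gt hsub, hcard] at hsplit
    simp only [coe_product, Set.mem_prod, mem_coe, mem_powersetCard]
    refine ⟨⟨fun c => by simp, hrank⟩, fun c => by simp, ?_⟩
    unfold rankIn at hrank
    omega
  · rintro ⟨A, B⟩ hAB
    simp only [coe_product, Set.mem_prod, mem_coe, mem_powersetCard] at hAB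
    obtain ⟨⟨hA, rfl⟩, hB, rfl⟩ := hAB
    have hA' : ∀ c ∈ A, c < a := fun c hc => mem_Iio.mp (hA hc)
    have hB' : ∀ c ∈ B, b < c := fun c hc => mem_Ioi.mp (hB hc)
    simp only [coe_filter, mem_powersetCard_univ, Set.mem_ofPred_eq]
    refine ⟨card_union_Icc_union hA' hB' hab, fun c hc => by simp [hc], ?_⟩
    rw [rankIn, filter_lt_union_Icc_union hA' hB' hab]
  · intro S hS
    simp only [coe_filter, mem_powersetCard_univ, Set.mem_ofPred_eq] at hS
    exact filter_lt_union_Icc_union_filter_gt hS.2.1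
  · rintro ⟨A, B⟩ hAB
    simp only [coe_product, Set.mem_prod, mem_coe, mem_powersetCard] at hAB
    have hA' : ∀ c ∈ A, c < a := fun c hc => mem_Iio.mp (hAB.1.1 hc)
    have hB' : ∀ c ∈ B, b < c := fun c hc => mem_Ioi.mp (hAB.2.1 hc)
    simp only [filter_lt_union_Icc_union hA' hB' hab, filter_gt_union_Icc_union hA' hB' hab]

/-- Upper Vandermonde identity: classify the `(r + 1 + s)`-subsets by their element of rank `r`. -/
theorem sum_choose_mul_choose_eq (m r s : ℕ) :
    ∑ a : Fin m, (a : ℕ).choose r * (m - 1 - a).choose s = m.choose (r + 1 + s) := by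
  have hexists (S : Finset (Fin m)) (hS : S ∈ powersetCard (r + 1 + s) univ) :
      ∃ a ∈ univ, Icc a a ⊆ S ∧ rankIn S a = r := by
    obtain ⟨a, ha, h⟩ := exists_rankIn_eq (S := S) (r := r) (by simp at hS; omega)
    exact ⟨a, mem_univ a, by simpa using ha, h⟩
  calc ∑ a : Fin m, (a : ℕ).choose r * (m - 1 - a).choose s
      = ∑ a : Fin m,
          #{S ∈ powersetCard (r + 1 + s) univ | Icc a a ⊆ S ∧ rankIn S a = r} := by
        refine sum_congr rfl fun a _ => ?_
        simpa using (card_filter_Icc_subset_rankIn_eq (le_refl a) r s).symm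
    _ = #{S ∈ powersetCard (r + 1 + s) univ |
          ∃ a ∈ univ, Icc a a ⊆ S ∧ rankIn S a = r} := by
        refine (card_filter_exists_eq_sum _ _ _ fun S _ a _ a' _ ha ha' => ?_).symm
        simp only [Icc_self, singleton_subset_iff] at ha ha'
        exact rankIn_injOn S ha.1 ha'.1 (ha.2.trans ha'.2.symm)
    _ = m.choose (r + 1 + s) := by rw [filter_true_of_mem hexists]; simp

def AdjacentAtRank {m : ℕ} (S : Finset (Fin m)) (r : ℕ) : Prop :=
  ∃ p ∈ S, ∃ d ∈ S, (p : ℕ) + 1 = d ∧ rankIn S d = r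

instance {m : ℕ} (S : Finset (Fin m)) (r : ℕ) : Decidable (AdjacentAtRank S r) := by
  unfold AdjacentAtRank; infer_instance

theorem Fin.Icc_castSucc_succ_subset_iff {M : ℕ} {p : Fin M} {S : Finset (Fin (M + 1))} :
    Icc p.castSucc p.succ ⊆ S ↔ p.castSucc ∈ S ∧ p.succ ∈ S := by
  have : Icc p.castSucc p.succ = {p.castSucc, p.succ} := by
    ext c
    simp only [mem_Icc, mem_insert, mem_singleton, Fin.le_def, Fin.ext_iff, Fin.val_castSucc,
      Fin.val_succ]
    omega
  rw [this, insert_subset_iff, singleton_subset_iff]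

theorem adjacentAtRank_succ_iff {M q : ℕ} {S : Finset (Fin (M + 1))} :
    AdjacentAtRank S (q + 1) ↔
      ∃ p ∈ (univ : Finset (Fin M)),
        Icc p.castSucc p.succ ⊆ S ∧ rankIn S p.castSucc = q := by
  simp only [Fin.Icc_castSucc_succ_subset_iff, mem_univ, true_and]
  constructor
  · rintro ⟨p, hp, d, hd, hpd, hr⟩
    have hpM : (p : ℕ) < M := by omega
    have hp' : (⟨p, hpM⟩ : Fin M).castSucc = p := rfl
    have hd' : (⟨p, hpM⟩ : Fin M).succ = d := Fin.ext (by simpa using hpd)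
    refine ⟨⟨p, hpM⟩, ⟨by rwa [hp'], by rwa [hd']⟩, ?_⟩
    have := rankIn_of_covBy hp (by simpa [Fin.covBy_iff] using hpd)
    rw [hp']
    omega
  · rintro ⟨p, ⟨hp, hd⟩, hr⟩
    have hcov : p.castSucc ⋖ p.succ := by simp [Fin.covBy_iff]
    exact ⟨_, hp, _, hd, by simp, by rw [rankIn_of_covBy hp hcov, hr]⟩

theorem card_filter_adjacentAtRank {M n r : ℕ} (hr : 1 ≤ r) (hrn : r < n) :
    #{S ∈ powersetCard n (univ : Finset (Fin (M + 1))) | AdjacentAtRank S r} =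
      M.choose (n - 1) := by
  obtain ⟨q, rfl⟩ : ∃ q, r = q + 1 := ⟨r - 1, by omega⟩
  obtain ⟨s, rfl⟩ : ∃ s, n = q + 2 + s := ⟨n - q - 2, by omega⟩
  calc #{S ∈ powersetCard (q + 2 + s) univ | AdjacentAtRank S (q + 1)}
      = #{S ∈ powersetCard (q + 2 + s) univ |
          ∃ p ∈ (univ : Finset (Fin M)), Icc p.castSucc p.succ ⊆ S ∧
            rankIn S p.castSucc = q} := by
        simp_rw [adjacentAtRank_succ_iff]
    _ = ∑ p : Fin M, #{S ∈ powersetCard (q + 2 + s) univ |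
          Icc p.castSucc p.succ ⊆ S ∧ rankIn S p.castSucc = q} := by
        refine card_filter_exists_eq_sum _ _ _ fun S _ p _ p' _ hp hp' => ?_
        rw [Fin.Icc_castSucc_succ_subset_iff] at hp hp'
        exact Fin.castSucc_injective M
          (rankIn_injOn S hp.1.1 hp'.1.1 (hp.2.trans hp'.2.symm))
    _ = ∑ p : Fin M, (p : ℕ).choose q * (M - 1 - p).choose s := by
        refine sum_congr rfl fun p _ => ?_
        have h2 : #(Icc p.castSucc p.succ) = 2 := by simp [Fin.card_Icc]; omega
        have := card_filter_Icc_subset_rankIn_eq (Fin.castSucc_le_succ p) q s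
        rw [h2] at this
        rw [this, Fin.val_castSucc, Fin.val_succ]
        congr 2
        omega
    _ = M.choose (q + 2 + s - 1) := by
        rw [sum_choose_mul_choose_eq]
        congr 1
        omega

theorem exists_perm_mem_iff_strictMonoOn {α : Type*} [Fintype α] [LinearOrder α]
    {S T : Finset α} (h : #S = #T) :
    ∃ σ : Equiv.Perm α, (∀ i, σ i ∈ T ↔ i ∈ S) ∧ StrictMonoOn σ S := by
  let e : {i // i ∈ S} ≃o {i // i ∈ T} :=
    (S.orderIsoOfFin rfl).symm.trans (T.orderIsoOfFin h.symm)
  let f : {i // i ∉ S} ≃ {i // i ∉ T} := Fintype.equivOfCardEq (by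
    simp only [Fintype.card_subtype_compl, Fintype.card_coe, h])
  have hS (i : α) (hi : i ∈ S) : Equiv.subtypeCongr e.toEquiv f i = e ⟨i, hi⟩ := by
    simp [Equiv.subtypeCongr, hi]
  refine ⟨Equiv.subtypeCongr e.toEquiv f, fun i => ?_, fun i hi j hj hij => ?_⟩
  · by_cases hi : i ∈ S
    · simp [hS i hi, hi]
    · simp [Equiv.subtypeCongr, hi, (f ⟨i, hi⟩).2]
  · rw [hS i hi, hS j hj]
    exact e.strictMono (show (⟨i, hi⟩ : {i // i ∈ S}) < ⟨j, hj⟩ from hij)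

section Relabel

variable {m : ℕ} {x : Fin m → MSym} {σ : Equiv.Perm (Fin m)}

def udPositions (x : Fin m → MSym) : Finset (Fin m) := {i | x i = .U ∨ x i = .D}

theorem mem_udPositions {i : Fin m} : i ∈ udPositions x ↔ x i = .U ∨ x i = .D := by
  simp [udPositions]

theorem card_udPositions (x : Fin m → MSym) :
    #(udPositions x) = symCount x .U + symCount x .D := by
  rw [udPositions, filter_or,
    card_union_of_disjoint (disjoint_filter.mpr fun _ _ h => by simp [h])]
  rfl

def numUBeforeFirstD (x : Fin m → MSym) : ℕ := #{i | x i = .U ∧ ∀ j, x j = .D → i < j}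

theorem symCount_comp_perm (x : Fin m → MSym) (σ : Equiv.Perm (Fin m)) (a : MSym) :
    symCount (x ∘ σ) a = symCount x a :=
  card_equiv σ fun i => by simp

theorem energy_comp_perm (α β : ℝ) (x : Fin m → MSym) (σ : Equiv.Perm (Fin m)) :
    energy α β (x ∘ σ) = energy α β x := by
  simp only [energy, symCount_comp_perm]

theorem symCountPrefix_comp (hσ : StrictMonoOn σ (udPositions (x ∘ σ))) {a : MSym}
    (ha : a = .U ∨ a = .D) {j : Fin m} (hj : j ∈ udPositions (x ∘ σ)) :
    symCountPrefix (x ∘ σ) a j = symCountPrefix x a (σ j) := by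
  refine card_equiv σ fun i => ?_
  simp only [mem_filter, mem_univ, true_and, Function.comp_apply]
  refine and_congr_left fun hi => (hσ.le_iff_le ?_ hj).symm
  simpa [mem_udPositions, hi] using ha

theorem ballot_iff_forall_D (x : Fin m → MSym) :
    (∀ j, symCountPrefix x .D j ≤ symCountPrefix x .U j) ↔
      ∀ j, x j = .D → symCountPrefix x .D j ≤ symCountPrefix x .U j := by
  refine ⟨fun h j _ => h j, fun h j => ?_⟩
  by_contra! hlt
  have hne : ({i | i ≤ j ∧ x i = .D} : Finset (Fin m)).Nonempty :=
    card_pos.mp (lt_of_le_of_lt (Nat.zero_le _) hlt)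
  set d := max' _ hne
  obtain ⟨-, hdj, hdD⟩ := mem_filter.mp (max'_mem _ hne)
  have hD : symCountPrefix x .D d = symCountPrefix x .D j := by
    refine congrArg card (filter_congr fun i _ => ⟨fun hi => ⟨hi.1.trans hdj, hi.2⟩,
      fun hi => ⟨le_max' _ i (by simpa using hi), hi.2⟩⟩)
  have hU : symCountPrefix x .U d ≤ symCountPrefix x .U j :=
    card_le_card (monotone_filter_right _ fun _ _ hi => ⟨hi.1.trans hdj, hi.2⟩)
  have := h d hdD
  omega

theorem isMotzkin2_comp_iff (hσ : StrictMonoOn σ (udPositions (x ∘ σ))) :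
    IsMotzkin2 (x ∘ σ) ↔ IsMotzkin2 x := by
  simp only [IsMotzkin2, ballot_iff_forall_D, symCount_comp_perm]
  refine and_congr_left fun _ => σ.forall_congr fun j => imp_congr_right fun hj => ?_
  have hj' : j ∈ udPositions (x ∘ σ) := mem_udPositions.mpr (Or.inr hj)
  rw [symCountPrefix_comp hσ (Or.inl rfl) hj', symCountPrefix_comp hσ (Or.inr rfl) hj']

theorem numUBeforeFirstD_comp (hσ : StrictMonoOn σ (udPositions (x ∘ σ))) :
    numUBeforeFirstD (x ∘ σ) = numUBeforeFirstD x := by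
  refine card_equiv σ fun i => ?_
  simp only [mem_filter, mem_univ, true_and, Function.comp_apply]
  refine and_congr_right fun hi => σ.forall_congr fun j => imp_congr_right fun hj => ?_
  exact (hσ.lt_iff_lt (mem_udPositions.mpr (Or.inl hi)) (mem_udPositions.mpr (Or.inr hj))).symm

end Relabel

section FirstD

variable {m : ℕ} {x : Fin m → MSym}

theorem exists_firstD (hD : ∃ i, x i = .D) : ∃ d, x d = .D ∧ ∀ j, x j = .D → d ≤ j := by
  obtain ⟨i, hi⟩ := hD
  have hne : ({i | x i = .D} : Finset (Fin m)).Nonempty := ⟨i, by simpa using hi⟩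
  exact ⟨min' _ hne, by simpa using min'_mem _ hne, fun j hj => min'_le _ j (by simpa using hj)⟩

theorem rankIn_udPositions_of_firstD {d : Fin m} (hd : x d = .D)
    (hmin : ∀ j, x j = .D → d ≤ j) : rankIn (udPositions x) d = numUBeforeFirstD x := by
  refine congrArg card (ext fun i => ?_)
  simp only [udPositions, mem_filter, mem_univ, true_and]
  constructor
  · rintro ⟨hi | hi, hid⟩
    · exact ⟨hi, fun j hj => hid.trans_le (hmin j hj)⟩
    · exact absurd (hmin i hi) hid.not_ge
  · rintro ⟨hi, hlt⟩
    exact ⟨Or.inl hi, hlt d hd⟩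

theorem firstDAfterU_iff (hD : ∃ i, x i = .D) :
    firstDAfterU x ↔ AdjacentAtRank (udPositions x) (numUBeforeFirstD x) := by
  obtain ⟨d, hd, hmin⟩ := exists_firstD hD
  have hdud : d ∈ udPositions x := mem_udPositions.mpr (Or.inr hd)
  rw [← rankIn_udPositions_of_firstD hd hmin]
  constructor
  · rintro ⟨⟨p, q⟩, hpq, hpU, hqD, hqmin⟩
    obtain rfl : q = d := le_antisymm (hqmin d hd) (hmin q hqD)
    exact ⟨p, mem_udPositions.mpr (Or.inl hpU), q, hdud, hpq.symm, rfl⟩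
  · rintro ⟨p, hp, q, hq, hpq, hr⟩
    obtain rfl : q = d := rankIn_injOn _ hq hdud hr
    refine ⟨(p, q), hpq.symm, (mem_udPositions.mp hp).resolve_right fun hpD => ?_, hd,
      fun i hi => hmin i hi⟩
    have := Fin.le_def.mp (hmin p hpD)
    omega

theorem one_le_numUBeforeFirstD (hx : IsMotzkin2 x) (hD : ∃ i, x i = .D) :
    1 ≤ numUBeforeFirstD x := by
  obtain ⟨d, hd, hmin⟩ := exists_firstD hD
  have hDd : 0 < symCountPrefix x .D d := card_pos.mpr ⟨d, by simp [hd]⟩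
  obtain ⟨i, hi⟩ := card_pos.mp (hDd.trans_le (hx.1 d))
  simp only [mem_filter, mem_univ, true_and] at hi
  refine card_pos.mpr ⟨i, ?_⟩
  simp only [mem_filter, mem_univ, true_and]
  refine ⟨hi.2, fun j hj => lt_of_le_of_ne (hi.1.trans (hmin j hj)) ?_⟩
  rintro rfl
  simp [hi.2] at hj

theorem numUBeforeFirstD_lt_card (hD : ∃ i, x i = .D) :
    numUBeforeFirstD x < #(udPositions x) := by
  obtain ⟨d, hd, hmin⟩ := exists_firstD hD
  rw [← rankIn_udPositions_of_firstD hd hmin]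
  exact rankIn_lt_card (mem_udPositions.mpr (Or.inr hd))

end FirstD

section Decomposition

variable {m k : ℕ}

def motzkinPaths (m k : ℕ) : Finset (Fin m → MSym) := {x | IsMotzkin2 x ∧ symCount x .U = k}

theorem sum_Sset_eq_sum_motzkinPaths (f : (Fin m → MSym) → ℝ) :
    ∑ x ∈ Sset m k, f x.1 = ∑ x ∈ motzkinPaths m k, f x := by
  refine (sum_map (Sset m k) (Function.Embedding.subtype _) f).symm.trans
    (congrArg (Finset.sum · f) ?_)
  ext x
  simp [Sset, motzkinPaths, and_comm]

theorem comp_mem_motzkinPaths_iff {x : Fin m → MSym} {σ : Equiv.Perm (Fin m)}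
    (hσ : StrictMonoOn σ (udPositions (x ∘ σ))) :
    x ∘ σ ∈ motzkinPaths m k ↔ x ∈ motzkinPaths m k := by
  simp [motzkinPaths, isMotzkin2_comp_iff hσ, symCount_comp_perm]

theorem card_udPositions_of_mem {x : Fin m → MSym} (hx : x ∈ motzkinPaths m k) :
    #(udPositions x) = 2 * k := by
  obtain ⟨hx, hU⟩ := (mem_filter.mp hx).2
  rw [card_udPositions, ← hx.2, hU, two_mul]

theorem exists_D_of_mem_motzkinPaths (hk : 1 ≤ k) {x : Fin m → MSym}
    (hx : x ∈ motzkinPaths m k) : ∃ i, x i = .D := by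
  obtain ⟨hx, hU⟩ := (mem_filter.mp hx).2
  have : 0 < symCount x .D := by rw [← hx.2, hU]; omega
  obtain ⟨i, hi⟩ := card_pos.mp this
  exact ⟨i, (mem_filter.mp hi).2⟩

theorem sum_motzkinPaths_fiber_eq {G : (Fin m → MSym) → ℝ}
    (hG : ∀ x (σ : Equiv.Perm (Fin m)),
      StrictMonoOn σ (udPositions (x ∘ σ)) → G (x ∘ σ) = G x)
    {S T : Finset (Fin m)} (hST : #S = #T) :
    ∑ x ∈ motzkinPaths m k with udPositions x = S, G x =
      ∑ x ∈ motzkinPaths m k with udPositions x = T, G x := by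
  obtain ⟨σ, hσT, hσ⟩ := exists_perm_mem_iff_strictMonoOn hST.symm
  have hud (y : Fin m → MSym) (hy : udPositions y = S) : udPositions (y ∘ σ) = T := by
    ext i
    rw [mem_udPositions, ← hσT, ← hy, mem_udPositions, Function.comp_apply]
  have hcomp (y : Fin m → MSym) : (y ∘ σ.symm) ∘ σ = y := by ext; simp
  refine sum_nbij' (· ∘ σ) (· ∘ σ.symm) (fun y hy => ?_) (fun x hx => ?_)
    (fun y _ => by ext; simp) (fun x _ => by ext; simp) (fun y hy => ?_)
  · rw [mem_filter] at hy ⊢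
    exact ⟨(comp_mem_motzkinPaths_iff (by rw [hud y hy.2]; exact hσ)).mpr hy.1, hud y hy.2⟩
  · rw [mem_filter] at hx ⊢
    have hy : udPositions (x ∘ σ.symm) = S := by
      ext i
      rw [mem_udPositions, Function.comp_apply, ← mem_udPositions, hx.2, ← hσT,
        Equiv.apply_symm_apply]
    have h := comp_mem_motzkinPaths_iff (k := k) (by rw [hud _ hy]; exact hσ)
    rw [hcomp] at h
    exact ⟨h.mp hx.1, hy⟩
  · exact (hG y σ (by rw [hud y (mem_filter.mp hy).2]; exact hσ)).symm

theorem sum_motzkinPaths_eq_sum_powersetCard {G : Finset (Fin m) → (Fin m → MSym) → ℝ}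
    (hG : ∀ S x (σ : Equiv.Perm (Fin m)),
      StrictMonoOn σ (udPositions (x ∘ σ)) → G S (x ∘ σ) = G S x)
    {T : Finset (Fin m)} (hT : #T = 2 * k) :
    ∑ x ∈ motzkinPaths m k, G (udPositions x) x =
      ∑ S ∈ powersetCard (2 * k) univ,
        ∑ y ∈ motzkinPaths m k with udPositions y = T, G S y := by
  rw [← sum_fiberwise_of_maps_to (g := udPositions)
    fun x hx => mem_powersetCard_univ.mpr (card_udPositions_of_mem hx)]
  refine sum_congr rfl fun S hS => ?_
  rw [← sum_motzkinPaths_fiber_eq (hG S) ((mem_powersetCard_univ.mp hS).trans hT.symm)]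
  exact sum_congr rfl fun x hx => by rw [(mem_filter.mp hx).2]

theorem sum_motzkinPaths_eq_choose_mul {w : (Fin m → MSym) → ℝ}
    (hw : ∀ x (σ : Equiv.Perm (Fin m)), w (x ∘ σ) = w x) {T : Finset (Fin m)}
    (hT : #T = 2 * k) :
    ∑ x ∈ motzkinPaths m k, w x =
      m.choose (2 * k) * ∑ y ∈ motzkinPaths m k with udPositions y = T, w y := by
  rw [sum_motzkinPaths_eq_sum_powersetCard (G := fun _ y => w y) (fun _ x σ _ => hw x σ) hT,
    sum_const, card_powersetCard, card_univ, Fintype.card_fin, nsmul_eq_mul]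

theorem sum_firstDAfterU_eq_choose_mul {M : ℕ} (hk : 1 ≤ k) {w : (Fin (M + 1) → MSym) → ℝ}
    (hw : ∀ x (σ : Equiv.Perm (Fin (M + 1))), w (x ∘ σ) = w x) {T : Finset (Fin (M + 1))}
    (hT : #T = 2 * k) :
    ∑ x ∈ motzkinPaths (M + 1) k with firstDAfterU x, w x =
      M.choose (2 * k - 1) * ∑ y ∈ motzkinPaths (M + 1) k with udPositions y = T, w y := by
  calc ∑ x ∈ motzkinPaths (M + 1) k with firstDAfterU x, w x
      = ∑ x ∈ motzkinPaths (M + 1) k,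
          if AdjacentAtRank (udPositions x) (numUBeforeFirstD x) then w x else 0 := by
        rw [sum_filter]
        exact sum_congr rfl fun x hx =>
          if_congr (firstDAfterU_iff (exists_D_of_mem_motzkinPaths hk hx)) rfl rfl
    _ = ∑ S ∈ powersetCard (2 * k) univ,
          ∑ y ∈ motzkinPaths (M + 1) k with udPositions y = T,
            if AdjacentAtRank S (numUBeforeFirstD y) then w y else 0 :=
        sum_motzkinPaths_eq_sum_powersetCard
          (G := fun S y => if AdjacentAtRank S (numUBeforeFirstD y) then w y else 0)
          (fun S x σ hσ => by simp only [numUBeforeFirstD_comp hσ, hw]) hT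
    _ = ∑ y ∈ motzkinPaths (M + 1) k with udPositions y = T,
          #{S ∈ powersetCard (2 * k) univ | AdjacentAtRank S (numUBeforeFirstD y)} * w y := by
        rw [sum_comm]
        exact sum_congr rfl fun y _ => by rw [← sum_filter, sum_const, nsmul_eq_mul]
    _ = M.choose (2 * k - 1) * ∑ y ∈ motzkinPaths (M + 1) k with udPositions y = T, w y := by
        rw [mul_sum]
        refine sum_congr rfl fun y hy => ?_
        obtain ⟨hy, -⟩ := mem_filter.mp hy
        have hD := exists_D_of_mem_motzkinPaths hk hy
        rw [card_filter_adjacentAtRank (one_le_numUBeforeFirstD (mem_filter.mp hy).2.1 hD)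
          ((numUBeforeFirstD_lt_card hD).trans_eq (card_udPositions_of_mem hy))]

end Decomposition

theorem motzkin_Ak_weight_general (α β : ℝ) (m k : ℕ) (hk1 : 1 ≤ k)
    (hk : k ≤ m / 2) :
    ∑ x ∈ (Sset m k).filter (fun x => firstDAfterU x.1),
        Real.exp (-(energy α β x.1)) =
      (2 * (k : ℝ) / (m : ℝ)) * ∑ x ∈ Sset m k, Real.exp (-(energy α β x.1)) := by
  obtain ⟨M, rfl⟩ : ∃ M, m = M + 1 := ⟨m - 1, by omega⟩
  obtain ⟨T, -, hT⟩ := exists_subset_card_eq (s := (univ : Finset (Fin (M + 1)))) (n := 2 * k)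
    (by simp; omega)
  set w : (Fin (M + 1) → MSym) → ℝ := fun x => Real.exp (-(energy α β x))
  have hw (x : Fin (M + 1) → MSym) (σ : Equiv.Perm (Fin (M + 1))) : w (x ∘ σ) = w x := by
    simp only [w, energy_comp_perm]
  rw [sum_filter, sum_Sset_eq_sum_motzkinPaths fun x => if firstDAfterU x then w x else 0,
    ← sum_filter, sum_firstDAfterU_eq_choose_mul hk1 hw hT, sum_Sset_eq_sum_motzkinPaths w,
    sum_motzkinPaths_eq_choose_mul hw hT]
  have hchoose :
      ((M + 1 : ℕ) : ℝ) * M.choose (2 * k - 1) = (M + 1).choose (2 * k) * (2 * k) := by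
    have := Nat.add_one_mul_choose_eq M (2 * k - 1)
    rw [show 2 * k - 1 + 1 = 2 * k by omega] at this
    exact_mod_cast this
  field_simp
  linear_combination (∑ y ∈ motzkinPaths (M + 1) k with udPositions y = T, w y) * hchoose

/-- For all real `α, β`, all `m ≥ 2` and all
`1 ≤ k ≤ ⌊m/2⌋`, with `A_k ⊆ S_k` the set of paths whose first `D` appears
immediately after a `U`, `Σ_{x ∈ A_k} e^{-E(x)} = (2k/m)·Σ_{x ∈ S_k} e^{-E(x)}`. -/
theorem motzkin_Ak_weight (α β : ℝ) (m k : ℕ) (hm : 2 ≤ m) (hk1 : 1 ≤ k)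
    (hk : k ≤ m / 2) :
    ∑ x ∈ (Sset m k).filter (fun x => firstDAfterU x.1),
        Real.exp (-(energy α β x.1)) =
      (2 * (k : ℝ) / (m : ℝ)) * ∑ x ∈ Sset m k, Real.exp (-(energy α β x.1)) :=
  motzkin_Ak_weight_general α β m k hk1 hk
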